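/- arXiv:1411.5727 — 3 statements merged into one kernel-verified Lean document; each statement's English description precedes it below -/
import Mathlib

section
/- For each ℓ ∈ {1,...,m} and all w ∈ ℝ^m, the first partial derivative of H_p with respect to w_ℓ is given by ∂H_p/∂w_ℓ (w) = p · Σ_{p_{m−1}=0}^{p−1} Σ_{p_{m−2}=0}^{p_{m−1}} ··· Σ_{p_1=0}^{p_2} C(p−1,p_{m−1})·C(p_{m−1},p_{m−2})···C(p_2,p_1) · (∏_{k=1}^{ℓ−1} θ_k^{p_k²}) · (∏_{k=ℓ}^{m−1} θ_k^{(p_k+1)²}) · w_1^{p_1} w_2^{p_2−p_1} ··· w_{m−1}^{p_{m−1}−p_{m−2}} w_m^{(p−1)−p_{m−1}} (with the empty products for ℓ = 1 and ℓ = m understood as 1). -/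
open Real Finset

lemma aux1 (n k : ℕ) (h : k < n) : (n - k) * n.choose k = n * (n-1).choose k := by
  have h1 := Nat.choose_succ_right_eq n k
  have h2 := Nat.add_one_mul_choose_eq (n-1) k
  simp only [Nat.succ_eq_add_one, show n - 1 + 1 = n from by omega] at h2
  calc (n - k) * n.choose k = n.choose k * (n - k) := Nat.mul_comm _ _
    _ = n.choose (k+1) * (k+1) := h1.symm
    _ = n * (n-1).choose k := h2.symm

lemma tel (r : ℕ → ℕ) (L : ℕ) (hmono : ∀ i, r i ≤ r (i+1)) (hlt : r L < r (L+1)) :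
    ∀ n, L < n →
      (r (L+1) - r L) * ∏ i ∈ Finset.Ico L n, (r (i+1)).choose (r i)
        = r n * ∏ i ∈ Finset.Ico L n, (r (i+1) - 1).choose (r i - if L < i then 1 else 0) := by
  have hm : Monotone r := monotone_nat_of_le_succ hmono
  intro n hn
  induction n, hn using Nat.le_induction with
  | base =>
      rw [show Finset.Ico L (L+1) = {L} from by rw [Finset.Ico_add_one_right_eq_Icc, Finset.Icc_self]]
      simp only [Finset.prod_singleton, if_neg (lt_irrefl L), Nat.sub_zero]
      exact aux1 _ _ hlt
  | succ n hn ih =>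
      rw [Finset.prod_Ico_succ_top (by omega), Finset.prod_Ico_succ_top (by omega),
        ← Nat.mul_assoc, ih, if_pos (by omega : L < n)]
      have h1 : 1 ≤ r n := le_trans (by omega : 1 ≤ r (L+1)) (hm hn)
      have h2 : 1 ≤ r (n+1) := le_trans h1 (hmono n)
      have key : r (n+1) * (r (n+1) - 1).choose (r n - 1) = (r (n+1)).choose (r n) * r n := by
        have h3 := Nat.add_one_mul_choose_eq (r (n+1) - 1) (r n - 1)
        simp only [Nat.succ_eq_add_one, show r (n+1) - 1 + 1 = r (n+1) from by omega,
          show r n - 1 + 1 = r n from by omega] at h3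
        exact h3
      rw [mul_right_comm, mul_comm (r n) ((r (n+1)).choose (r n)), ← key, mul_assoc,
        mul_comm ((r (n+1) - 1).choose (r n - 1))]

lemma keyA (m p L : ℕ) (hL : L < m) (r : ℕ → ℕ) (hmono : ∀ i, r i ≤ r (i+1))
    (hm : r m = p) (hlt : r L < r (L+1)) :
    (r (L+1) - r L) * ∏ i ∈ Finset.range m, (r (i+1)).choose (r i)
      = p * ∏ i ∈ Finset.range m, (r (i+1) - (if L < i+1 then 1 else 0)).choose
          (r i - (if L < i then 1 else 0)) := by
  rw [Finset.range_eq_Ico, ← Finset.prod_Ico_consecutive _ (Nat.zero_le L) hL.le,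
    ← Finset.prod_Ico_consecutive _ (Nat.zero_le L) hL.le]
  have h1 : ∏ i ∈ Finset.Ico 0 L, (r (i+1) - (if L < i+1 then 1 else 0)).choose
      (r i - (if L < i then 1 else 0)) = ∏ i ∈ Finset.Ico 0 L, (r (i+1)).choose (r i) := by
    refine Finset.prod_congr rfl fun i hi => ?_
    have := (Finset.mem_Ico.mp hi).2
    rw [if_neg (by omega), if_neg (by omega)]
    simp
  have h2 : ∏ i ∈ Finset.Ico L m, (r (i+1) - (if L < i+1 then 1 else 0)).choose
      (r i - (if L < i then 1 else 0))
      = ∏ i ∈ Finset.Ico L m, (r (i+1) - 1).choose (r i - if L < i then 1 else 0) := by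
    refine Finset.prod_congr rfl fun i hi => ?_
    have := (Finset.mem_Ico.mp hi).1
    rw [if_pos (by omega)]
  rw [h1, h2, ← hm, mul_comm (∏ i ∈ Finset.Ico 0 L, _), mul_comm (∏ i ∈ Finset.Ico 0 L, _),
    ← mul_assoc, ← mul_assoc, tel r L hmono hlt m (by omega)]

lemma mono_hasFDeriv {m : ℕ} (e : Fin m → ℕ) (w : Fin m → ℝ) :
    HasFDerivAt (fun w : Fin m → ℝ => ∏ j, w j ^ e j)
      (∑ j : Fin m, (∏ j' ∈ Finset.univ.erase j, w j' ^ e j') •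
        (((e j : ℝ) * w j ^ (e j - 1)) • (ContinuousLinearMap.proj j : (Fin m → ℝ) →L[ℝ] ℝ))) w := by
  apply HasFDerivAt.finset_prod
  intro j _
  have hd : HasDerivAt (fun x : ℝ => x ^ e j) ((e j : ℝ) * w j ^ (e j - 1)) (w j) :=
    hasDerivAt_pow (e j) (w j)
  have hp : HasFDerivAt (fun w : Fin m → ℝ => w j)
      (ContinuousLinearMap.proj j : (Fin m → ℝ) →L[ℝ] ℝ) w := hasFDerivAt_apply j w
  exact hd.comp_hasFDerivAt w hp

lemma sum_fderiv {m : ℕ} {ι : Type*} (S : Finset ι) (c : ι → ℝ) (e : ι → Fin m → ℕ)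
    (ℓ : Fin m) (w : Fin m → ℝ) :
    fderiv ℝ (fun w : Fin m → ℝ => ∑ q ∈ S, c q * ∏ j, w j ^ e q j) w (Pi.single ℓ 1) =
      ∑ q ∈ S, c q * (((e q ℓ : ℝ) * w ℓ ^ (e q ℓ - 1)) *
        ∏ j' ∈ Finset.univ.erase ℓ, w j' ^ e q j') := by
  have hder : HasFDerivAt (fun w : Fin m → ℝ => ∑ q ∈ S, c q * ∏ j, w j ^ e q j)
      (∑ q ∈ S, c q • (∑ j : Fin m, (∏ j' ∈ Finset.univ.erase j, w j' ^ e q j') •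
        (((e q j : ℝ) * w j ^ (e q j - 1)) • (ContinuousLinearMap.proj j : (Fin m → ℝ) →L[ℝ] ℝ)))) w := by
    apply HasFDerivAt.fun_sum
    intro q _
    exact (mono_hasFDeriv (e q) w).const_mul (c q)
  rw [hder.fderiv]
  rw [ContinuousLinearMap.sum_apply]
  refine Finset.sum_congr rfl fun q _ => ?_
  rw [ContinuousLinearMap.smul_apply, ContinuousLinearMap.sum_apply]
  rw [Finset.sum_eq_single ℓ]
  · simp [mul_comm, mul_assoc, mul_left_comm]
  · intro j _ hj
    simp [Pi.single_eq_of_ne hj]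
  · simp

/-- First partial derivatives of the homogeneous Lyapunov polynomial
`H_p`.  The nested sum `Σ_{p_{m-1}=0}^{p} ... Σ_{p_1=0}^{p_2}` over chains
`0 ≤ p_1 ≤ ... ≤ p_{m-1} ≤ p` is encoded as a sum over monotone tuples
`q : Fin (m+1) → ℕ` with `q 0 = 0` and `q m = p`, where `q j` plays the role of `p_j`
(`p_0 = 0`, `p_m = p`).  The partial derivative `∂H_p/∂w_ℓ (w)` is
`fderiv ℝ H w (Pi.single ℓ 1)`, and `ℓ : Fin m` is the paper's `0`-based index
(paper `ℓ` is `(ℓ : ℕ) + 1`); similarly `θ k` for `k : Fin (m-1)` is the paper's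
`θ_{k+1}`. -/
theorem stmt8 (m p : ℕ) (hm : 2 ≤ m) (hp : 2 ≤ p)
    (θ : Fin (m - 1) → ℝ) (hθ : ∀ k, 0 < θ k)
    (H : (Fin m → ℝ) → ℝ)
    (hH : ∀ w : Fin m → ℝ, H w =
      ∑ q ∈ (Fintype.piFinset fun _ : Fin (m + 1) => Finset.range (p + 1)).filter
          (fun q => (∀ i j : Fin (m + 1), i ≤ j → q i ≤ q j) ∧
            q 0 = 0 ∧ q (Fin.last m) = p),
        (∏ j : Fin m, ((q j.succ).choose (q j.castSucc) : ℝ)) *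
        (∏ k : Fin (m - 1), θ k ^ (q ⟨(k : ℕ) + 1, by have := k.isLt; omega⟩) ^ 2) *
        (∏ j : Fin m, w j ^ (q j.succ - q j.castSucc))) :
    ∀ (ℓ : Fin m) (w : Fin m → ℝ),
      fderiv ℝ H w (Pi.single ℓ 1) =
        (p : ℝ) *
          ∑ q ∈ (Fintype.piFinset fun _ : Fin (m + 1) => Finset.range p).filter
              (fun q => (∀ i j : Fin (m + 1), i ≤ j → q i ≤ q j) ∧
                q 0 = 0 ∧ q (Fin.last m) = p - 1),
            (∏ j : Fin m, ((q j.succ).choose (q j.castSucc) : ℝ)) *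
            (∏ k : Fin (m - 1), θ k ^
              (if (k : ℕ) < (ℓ : ℕ) then (q ⟨(k : ℕ) + 1, by have := k.isLt; omega⟩) ^ 2
               else ((q ⟨(k : ℕ) + 1, by have := k.isLt; omega⟩) + 1) ^ 2)) *
            (∏ j : Fin m, w j ^ (q j.succ - q j.castSucc)) := by
  intro ℓ w
  classical
  set L : ℕ := (ℓ : ℕ) with hLdef
  have hLm : L < m := ℓ.isLt
  set S := (Fintype.piFinset fun _ : Fin (m + 1) => Finset.range (p + 1)).filter
      (fun q => (∀ i j : Fin (m + 1), i ≤ j → q i ≤ q j) ∧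
        q 0 = 0 ∧ q (Fin.last m) = p) with hSdef
  have step1 : fderiv ℝ H w (Pi.single ℓ 1) =
      ∑ q ∈ S,
        ((∏ j : Fin m, ((q j.succ).choose (q j.castSucc) : ℝ)) *
          (∏ k : Fin (m - 1), θ k ^ (q ⟨(k : ℕ) + 1, by have := k.isLt; omega⟩) ^ 2)) *
        ((((q ℓ.succ - q ℓ.castSucc : ℕ) : ℝ) * w ℓ ^ (q ℓ.succ - q ℓ.castSucc - 1)) *
          ∏ j' ∈ Finset.univ.erase ℓ, w j' ^ (q j'.succ - q j'.castSucc)) := by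
    rw [funext hH]
    exact sum_fderiv S
      (fun q => (∏ j : Fin m, ((q j.succ).choose (q j.castSucc) : ℝ)) *
        (∏ k : Fin (m - 1), θ k ^ (q ⟨(k : ℕ) + 1, by have := k.isLt; omega⟩) ^ 2))
      (fun q j => q j.succ - q j.castSucc) ℓ w
  rw [step1, Finset.mul_sum]
  refine Eq.trans (Finset.sum_filter_of_ne
      (p := fun q => q ℓ.castSucc < q ℓ.succ) ?_).symm
    (Finset.sum_nbij' (fun q j => q j - if L < (j : ℕ) then 1 else 0)
      (fun q j => q j + if L < (j : ℕ) then 1 else 0) ?_ ?_ ?_ ?_ ?_)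
  · -- vanishing terms
    intro q hq hne
    obtain ⟨-, hmono, -, -⟩ := Finset.mem_filter.mp hq
    by_contra hcon
    have h1 : q ℓ.castSucc ≤ q ℓ.succ := hmono _ _ ℓ.castSucc_le_succ
    have h2 : q ℓ.succ - q ℓ.castSucc = 0 := by omega
    apply hne
    rw [h2]
    simp
  · -- forward membership
    intro q hq
    obtain ⟨hqS, hstrict⟩ := Finset.mem_filter.mp hq
    obtain ⟨hpi, hmono, h0, hlast⟩ := Finset.mem_filter.mp hqS
    have hub : ∀ j, q j ≤ p := fun j => by
      have := Fintype.mem_piFinset.mp hpi j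
      simpa [Nat.lt_succ_iff] using this
    have hq1 : ∀ j : Fin (m+1), L < (j : ℕ) → 1 ≤ q j := by
      intro j hj
      have h1 : q ℓ.succ ≤ q j := hmono ℓ.succ j (by
        rw [Fin.le_def]; simp only [Fin.val_succ]; omega)
      omega
    have hclt : q ℓ.castSucc < p := by
      have h1 : q ℓ.succ ≤ q (Fin.last m) := hmono ℓ.succ (Fin.last m) (by
        rw [Fin.le_def]; simp only [Fin.val_succ, Fin.val_last]; omega)
      omega
    simp only [Finset.mem_filter, Fintype.mem_piFinset, Finset.mem_range]
    refine ⟨fun j => ?_, fun i j hij => ?_, ?_, ?_⟩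
    · by_cases hj : L < (j : ℕ)
      · rw [if_pos hj]
        have := hq1 j hj
        have := hub j
        omega
      · rw [if_neg hj]
        have h2 : q j ≤ q ℓ.castSucc := hmono j ℓ.castSucc (by
          rw [Fin.le_def]; simp only [Fin.coe_castSucc]; omega)
        omega
    · have hijv : (i : ℕ) ≤ (j : ℕ) := hij
      have h1 := hmono i j hij
      have h2 : (i : ℕ) ≤ L → q i ≤ q ℓ.castSucc := fun h =>
        hmono i ℓ.castSucc (by rw [Fin.le_def]; simp only [Fin.coe_castSucc]; omega)
      have h3 : L < (j : ℕ) → q ℓ.succ ≤ q j := fun h =>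
        hmono ℓ.succ j (by rw [Fin.le_def]; simp only [Fin.val_succ]; omega)
      split_ifs with ha hb hb
      · omega
      · omega
      · have := h2 (by omega)
        have := h3 hb
        omega
      · omega
    · simp only [Fin.val_zero, if_neg (by omega : ¬ L < 0)]
      omega
    · simp only [Fin.val_last, if_pos hLm]
      omega
  · -- backward membership
    intro q hq
    obtain ⟨hpi, hmono, h0, hlast⟩ := Finset.mem_filter.mp hq
    have hub : ∀ j, q j < p := fun j => by
      have := Fintype.mem_piFinset.mp hpi j
      simpa using this
    simp only [hSdef, Finset.mem_filter, Fintype.mem_piFinset, Finset.mem_range]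
    refine ⟨⟨fun j => ?_, fun i j hij => ?_, ?_, ?_⟩, ?_⟩
    · have := hub j
      split_ifs <;> omega
    · have hijv : (i : ℕ) ≤ (j : ℕ) := hij
      have h1 := hmono i j hij
      split_ifs with ha hb hb <;> omega
    · simp only [Fin.val_zero, if_neg (by omega : ¬ L < 0)]
      simp [h0]
    · simp only [Fin.val_last, if_pos hLm]
      omega
    · -- strict inequality at ℓ
      have h1 := hmono ℓ.castSucc ℓ.succ ℓ.castSucc_le_succ
      simp only [Fin.val_succ, Fin.coe_castSucc]
      rw [if_neg (by omega : ¬ L < (ℓ : ℕ)), if_pos (by omega : L < (ℓ : ℕ) + 1)]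
      omega
  · -- left inverse
    intro q hq
    obtain ⟨hqS, hstrict⟩ := Finset.mem_filter.mp hq
    obtain ⟨hpi, hmono, h0, hlast⟩ := Finset.mem_filter.mp hqS
    have hq1 : ∀ j : Fin (m+1), L < (j : ℕ) → 1 ≤ q j := by
      intro j hj
      have h1 : q ℓ.succ ≤ q j := hmono ℓ.succ j (by
        rw [Fin.le_def]; simp only [Fin.val_succ]; omega)
      omega
    funext j
    by_cases hj : L < (j : ℕ)
    · have := hq1 j hj
      simp only [if_pos hj]
      omega
    · simp only [if_neg hj]
      omega
  · -- right inverse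
    intro q _
    funext j
    by_cases hj : L < (j : ℕ) <;> simp [hj]
  · -- values
    intro q hq
    obtain ⟨hqS, hstrict⟩ := Finset.mem_filter.mp hq
    obtain ⟨hpi, hmono, h0, hlast⟩ := Finset.mem_filter.mp hqS
    have hq1 : ∀ j : Fin (m+1), L < (j : ℕ) → 1 ≤ q j := by
      intro j hj
      have h1 : q ℓ.succ ≤ q j := hmono ℓ.succ j (by
        rw [Fin.le_def]; simp only [Fin.val_succ]; omega)
      omega
    -- Part A: the binomial-coefficient identity
    have hA : (q ℓ.succ - q ℓ.castSucc) * ∏ j : Fin m, (q j.succ).choose (q j.castSucc)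
        = p * ∏ j : Fin m,
            (q j.succ - if L < ((j.succ : Fin (m+1)) : ℕ) then 1 else 0).choose
            (q j.castSucc - if L < ((j.castSucc : Fin (m+1)) : ℕ) then 1 else 0) := by
      set r : ℕ → ℕ := fun i => q ⟨min i m, by omega⟩ with hrdef
      have hrmono : ∀ i, r i ≤ r (i+1) := fun i =>
        hmono _ _ (by rw [Fin.le_def]; simp only []; omega)
      have hrm : r m = p := by
        rw [hrdef]
        exact (congrArg q (Fin.ext (by simp only [Fin.val_last]; omega))).trans hlast
      have hcast : ∀ j : Fin m, r (j : ℕ) = q j.castSucc := fun j => by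
        rw [hrdef]
        exact congrArg q (Fin.ext (by simp only [Fin.coe_castSucc]; omega))
      have hsucc : ∀ j : Fin m, r ((j : ℕ)+1) = q j.succ := fun j => by
        rw [hrdef]
        exact congrArg q (Fin.ext (by have := j.isLt; simp only [Fin.val_succ]; omega))
      have hrlt : r L < r (L+1) := by
        rw [hcast ℓ, hsucc ℓ]; exact hstrict
      have hP1 : ∏ j : Fin m, (q j.succ).choose (q j.castSucc)
          = ∏ i ∈ Finset.range m, (r (i+1)).choose (r i) := by
        rw [← Fin.prod_univ_eq_prod_range (fun i => (r (i+1)).choose (r i)) m]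
        exact Finset.prod_congr rfl fun j _ => by rw [hsucc j, hcast j]
      have hP2 : ∏ j : Fin m,
            (q j.succ - if L < ((j.succ : Fin (m+1)) : ℕ) then 1 else 0).choose
            (q j.castSucc - if L < ((j.castSucc : Fin (m+1)) : ℕ) then 1 else 0)
          = ∏ i ∈ Finset.range m, (r (i+1) - (if L < i+1 then 1 else 0)).choose
              (r i - (if L < i then 1 else 0)) := by
        rw [← Fin.prod_univ_eq_prod_range
          (fun i => (r (i+1) - (if L < i+1 then 1 else 0)).choose
            (r i - (if L < i then 1 else 0))) m]
        refine Finset.prod_congr rfl fun j _ => ?_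
        rw [hsucc j, hcast j]
        simp only [Fin.val_succ, Fin.coe_castSucc]
      rw [hP1, hP2, show q ℓ.succ = r (L+1) from (hsucc ℓ).symm,
        show q ℓ.castSucc = r L from (hcast ℓ).symm]
      exact keyA m p L hLm r hrmono hrm hrlt
    have castA : ((q ℓ.succ - q ℓ.castSucc : ℕ) : ℝ) *
          (∏ j : Fin m, ((q j.succ).choose (q j.castSucc) : ℝ))
        = (p : ℝ) * ∏ j : Fin m,
            (((q j.succ - if L < ((j.succ : Fin (m+1)) : ℕ) then 1 else 0).choose
              (q j.castSucc - if L < ((j.castSucc : Fin (m+1)) : ℕ) then 1 else 0) : ℕ) : ℝ) := by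
      exact_mod_cast congrArg (Nat.cast (R := ℝ)) hA
    -- Part B : the θ-product
    have hB : (∏ k : Fin (m - 1), θ k ^ (q ⟨(k : ℕ) + 1, by have := k.isLt; omega⟩) ^ 2)
        = ∏ k : Fin (m - 1), θ k ^
            (if (k : ℕ) < L then
              (q ⟨(k : ℕ) + 1, by have := k.isLt; omega⟩
                - if L < ((⟨(k : ℕ) + 1, by have := k.isLt; omega⟩ : Fin (m+1)) : ℕ) then 1 else 0) ^ 2
             else ((q ⟨(k : ℕ) + 1, by have := k.isLt; omega⟩
                - if L < ((⟨(k : ℕ) + 1, by have := k.isLt; omega⟩ : Fin (m+1)) : ℕ) then 1 else 0) + 1) ^ 2) := by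
      refine Finset.prod_congr rfl fun k _ => ?_
      congr 1
      have hval : ((⟨(k : ℕ) + 1, by have := k.isLt; omega⟩ : Fin (m+1)) : ℕ) = (k : ℕ) + 1 := rfl
      by_cases hk : (k : ℕ) < L
      · rw [if_pos hk, hval, if_neg (by omega : ¬ L < (k : ℕ) + 1)]
        norm_num
      · rw [if_neg hk, hval, if_pos (by omega : L < (k : ℕ) + 1)]
        have := hq1 ⟨(k : ℕ) + 1, by have := k.isLt; omega⟩ (by rw [hval]; omega)
        congr 1
        omega
    -- Part C : the w-product
    have hC : w ℓ ^ (q ℓ.succ - q ℓ.castSucc - 1) *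
          ∏ j' ∈ Finset.univ.erase ℓ, w j' ^ (q j'.succ - q j'.castSucc)
        = ∏ j : Fin m, w j ^
            ((q j.succ - if L < ((j.succ : Fin (m+1)) : ℕ) then 1 else 0)
              - (q j.castSucc - if L < ((j.castSucc : Fin (m+1)) : ℕ) then 1 else 0)) := by
      rw [← Finset.mul_prod_erase Finset.univ
        (fun j : Fin m => w j ^
            ((q j.succ - if L < ((j.succ : Fin (m+1)) : ℕ) then 1 else 0)
              - (q j.castSucc - if L < ((j.castSucc : Fin (m+1)) : ℕ) then 1 else 0)))
        (Finset.mem_univ ℓ)]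
      congr 1
      · congr 1
        simp only [Fin.val_succ, Fin.coe_castSucc]
        rw [if_pos (by omega : L < (ℓ : ℕ) + 1), if_neg (by omega : ¬ L < (ℓ : ℕ))]
        omega
      · refine Finset.prod_congr rfl fun j hj => ?_
        have hjne : (j : ℕ) ≠ L := fun h => (Finset.mem_erase.mp hj).1 (Fin.ext (by omega))
        congr 1
        simp only [Fin.val_succ, Fin.coe_castSucc]
        by_cases hjL : (j : ℕ) < L
        · rw [if_neg (by omega : ¬ L < (j : ℕ) + 1), if_neg (by omega : ¬ L < (j : ℕ))]
          omega
        · have hgt : L < (j : ℕ) := by omega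
          have h1 := hq1 j.castSucc (by simp only [Fin.coe_castSucc]; omega)
          have h2 := hq1 j.succ (by simp only [Fin.val_succ]; omega)
          rw [if_pos (by omega : L < (j : ℕ) + 1), if_pos hgt]
          omega
    calc ((∏ j : Fin m, ((q j.succ).choose (q j.castSucc) : ℝ)) *
          (∏ k : Fin (m - 1), θ k ^ (q ⟨(k : ℕ) + 1, by have := k.isLt; omega⟩) ^ 2)) *
        ((((q ℓ.succ - q ℓ.castSucc : ℕ) : ℝ) * w ℓ ^ (q ℓ.succ - q ℓ.castSucc - 1)) *
          ∏ j' ∈ Finset.univ.erase ℓ, w j' ^ (q j'.succ - q j'.castSucc))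
        = (((q ℓ.succ - q ℓ.castSucc : ℕ) : ℝ) *
            (∏ j : Fin m, ((q j.succ).choose (q j.castSucc) : ℝ))) *
          ((∏ k : Fin (m - 1), θ k ^ (q ⟨(k : ℕ) + 1, by have := k.isLt; omega⟩) ^ 2) *
            (w ℓ ^ (q ℓ.succ - q ℓ.castSucc - 1) *
              ∏ j' ∈ Finset.univ.erase ℓ, w j' ^ (q j'.succ - q j'.castSucc))) := by ring
      _ = _ := by
          rw [castA, hB, hC]
          ring
end

section
/- For every m×m real symmetric matrix A with m > 2, the quantity K_m^m defined by the recursion satisfies K_m^m = det[m] · ∏_{k=1}^{m−2} (det[k])^{2^{(m−k−2)}}, where det[k] denotes the k-th leading principal minor of A; and for m = 2, K_2^2 = det[2]. -/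
open Real Matrix Finset


open Matrix Polynomial

private lemma dj_nonsing {n : ℕ} (M : Matrix (Fin (n+2)) (Fin (n+2)) ℝ) (hM : M.det ≠ 0) :
    M.det * (M.submatrix (Fin.castAdd 2) (Fin.castAdd 2)).det =
    (M.submatrix Fin.castSucc Fin.castSucc).det *
      (M.submatrix (Fin.succAbove ⟨n, by omega⟩) (Fin.succAbove ⟨n, by omega⟩)).det -
    (M.submatrix Fin.castSucc (Fin.succAbove ⟨n, by omega⟩)).det *
      (M.submatrix (Fin.succAbove ⟨n, by omega⟩) Fin.castSucc).det := by
  set p : Fin (n+2) := ⟨n, by omega⟩ with hp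
  set q : Fin (n+2) := Fin.last (n+1) with hq
  set a := adjugate M with ha
  set N : Matrix (Fin (n+2)) (Fin (n+2)) ℝ :=
    Matrix.of fun i j : Fin (n+2) => if (j:ℕ) < n then (if i = j then (1:ℝ) else 0) else a i j with hN
  have e : Fin n ⊕ Fin 2 ≃ Fin (n+2) := finSumFinEquiv
  have hMN : M * N =
      Matrix.of fun i j : Fin (n+2) => if (j:ℕ) < n then M i j else M.det * (if i = j then (1:ℝ) else 0) := by
    ext i j
    simp only [Matrix.mul_apply, hN, Matrix.of_apply]
    by_cases hj : (j:ℕ) < n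
    · simp [hj, mul_ite, Finset.sum_ite_eq' Finset.univ j (fun k => M i k)]
    · simp only [hj, if_false]
      calc (∑ k, M i k * a k j) = (M * a) i j := (Matrix.mul_apply).symm
        _ = (M.det • (1 : Matrix (Fin (n+2)) (Fin (n+2)) ℝ)) i j := by rw [ha, Matrix.mul_adjugate]
        _ = M.det * (if i = j then 1 else 0) := by
            simp [Matrix.smul_apply, Matrix.one_apply]
  have hNdet : N.det = a p p * a q q - a p q * a q p := by
    rw [← Matrix.det_submatrix_equiv_self finSumFinEquiv N]
    have hblock : N.submatrix finSumFinEquiv finSumFinEquiv =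
        Matrix.fromBlocks 1
          (Matrix.of fun i k => a (Fin.castAdd 2 i) (Fin.natAdd n k)) 0
          (Matrix.of fun k l => a (Fin.natAdd n k) (Fin.natAdd n l)) := by
      ext i j
      cases i with
      | inl i => cases j with
        | inl j => simp [hN, Matrix.one_apply, Fin.ext_iff]
        | inr j => simp [hN]
      | inr i => cases j with
        | inl j =>
          have hj := j.isLt
          simp only [Matrix.submatrix_apply, finSumFinEquiv_apply_left,
            finSumFinEquiv_apply_right, hN, Matrix.of_apply, Matrix.fromBlocks_apply₂₁]
          rw [if_pos (by simpa using hj), if_neg (by simp [Fin.ext_iff]; omega)]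
          rfl
        | inr j => simp [hN]
    rw [hblock, Matrix.det_fromBlocks_zero₂₁, Matrix.det_one, one_mul, Matrix.det_fin_two]
    have h0 : Fin.natAdd n (0 : Fin 2) = p := by simp [hp, Fin.ext_iff]
    have h1 : Fin.natAdd n (1 : Fin 2) = q := by simp [hq, Fin.ext_iff, Fin.last]
    simp [h0, h1]
  have hMNdet : (M * N).det = (M.submatrix (Fin.castAdd 2) (Fin.castAdd 2)).det * M.det ^ 2 := by
    rw [← Matrix.det_submatrix_equiv_self finSumFinEquiv (M * N)]
    have hblock : (M * N).submatrix finSumFinEquiv finSumFinEquiv =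
        Matrix.fromBlocks (M.submatrix (Fin.castAdd 2) (Fin.castAdd 2)) 0
          (Matrix.of fun k j => M (Fin.natAdd n k) (Fin.castAdd 2 j))
          (M.det • (1 : Matrix (Fin 2) (Fin 2) ℝ)) := by
      ext i j
      cases i with
      | inl i => cases j with
        | inl j => simp [hMN]
        | inr j =>
          have hi := i.isLt
          simp only [Matrix.submatrix_apply, finSumFinEquiv_apply_left,
            finSumFinEquiv_apply_right, hMN, Matrix.of_apply, Matrix.fromBlocks_apply₁₂]
          rw [if_neg (by simp), if_neg (by simp [Fin.ext_iff]; omega)]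
          simp
      | inr i => cases j with
        | inl j => simp [hMN]
        | inr j => simp [hMN, Matrix.one_apply, Fin.ext_iff]
    rw [hblock, Matrix.det_fromBlocks_zero₁₂]
    congr 1
    rw [Matrix.det_smul, Matrix.det_one, mul_one]
    simp [Fintype.card_fin]
  have hcancel : N.det = M.det * (M.submatrix (Fin.castAdd 2) (Fin.castAdd 2)).det := by
    have h := hMNdet
    rw [Matrix.det_mul] at h
    have : M.det * N.det = M.det * (M.det * (M.submatrix (Fin.castAdd 2) (Fin.castAdd 2)).det) := by
      rw [h]; ring
    exact mul_left_cancel₀ hM this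
  rw [← hcancel, hNdet]
  have happ : q.succAbove = Fin.castSucc := by rw [hq, Fin.succAbove_last]
  have e1 : a p p = (M.submatrix (Fin.succAbove p) (Fin.succAbove p)).det := by
    rw [ha, Matrix.adjugate_fin_succ_eq_det_submatrix]
    rw [Even.neg_one_pow ⟨(p:ℕ), rfl⟩, one_mul]
  have e2 : a q q = (M.submatrix Fin.castSucc Fin.castSucc).det := by
    rw [ha, Matrix.adjugate_fin_succ_eq_det_submatrix, happ]
    rw [Even.neg_one_pow ⟨(q:ℕ), rfl⟩, one_mul]
  have e3 : a p q = -(M.submatrix Fin.castSucc (Fin.succAbove p)).det := by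
    rw [ha, Matrix.adjugate_fin_succ_eq_det_submatrix, happ]
    have : ((q:ℕ) + (p:ℕ)) = 2 * n + 1 := by simp [hp, hq, Fin.last]; ring
    rw [this, Odd.neg_one_pow ⟨n, rfl⟩]
    ring
  have e4 : a q p = -(M.submatrix (Fin.succAbove p) Fin.castSucc).det := by
    rw [ha, Matrix.adjugate_fin_succ_eq_det_submatrix, happ]
    have : ((p:ℕ) + (q:ℕ)) = 2 * n + 1 := by simp [hp, hq, Fin.last]; ring
    rw [this, Odd.neg_one_pow ⟨n, rfl⟩]
    ring
  rw [e1, e2, e3, e4]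
  ring

private lemma dj {n : ℕ} (M : Matrix (Fin (n+2)) (Fin (n+2)) ℝ) :
    M.det * (M.submatrix (Fin.castAdd 2) (Fin.castAdd 2)).det =
    (M.submatrix Fin.castSucc Fin.castSucc).det *
      (M.submatrix (Fin.succAbove ⟨n, by omega⟩) (Fin.succAbove ⟨n, by omega⟩)).det -
    (M.submatrix Fin.castSucc (Fin.succAbove ⟨n, by omega⟩)).det *
      (M.submatrix (Fin.succAbove ⟨n, by omega⟩) Fin.castSucc).det := by
  set Mt : Matrix (Fin (n+2)) (Fin (n+2)) ℝ[X] :=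
    M.map Polynomial.C + (Polynomial.X : ℝ[X]) • 1 with hMt
  have hmap : ∀ t : ℝ, Mt.map (Polynomial.evalRingHom t) = M + t • 1 := by
    intro t
    ext i j
    by_cases h : i = j
    · subst h; simp [hMt, Matrix.one_apply]
    · simp [hMt, h, Matrix.one_apply]
  have hdetMt : Mt.det ≠ 0 := by
    have : Mt = Matrix.charmatrix (-M) := by
      ext i j
      by_cases h : i = j
      · subst h
        rw [Matrix.charmatrix_apply_eq]
        simp [hMt, Matrix.one_apply]
        ring
      · rw [Matrix.charmatrix_apply_ne _ _ _ h]
        simp [hMt, h, Matrix.one_apply]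
    rw [this]
    exact (Matrix.charpoly_monic (-M)).ne_zero
  set F : ℝ[X] :=
    Mt.det * (Mt.submatrix (Fin.castAdd 2) (Fin.castAdd 2)).det -
    ((Mt.submatrix Fin.castSucc Fin.castSucc).det *
      (Mt.submatrix (Fin.succAbove ⟨n, by omega⟩) (Fin.succAbove ⟨n, by omega⟩)).det -
    (Mt.submatrix Fin.castSucc (Fin.succAbove ⟨n, by omega⟩)).det *
      (Mt.submatrix (Fin.succAbove ⟨n, by omega⟩) Fin.castSucc).det) with hF
  have heval : ∀ (t : ℝ) (f : Fin (n+2) → Fin (n+2)) (g : Fin (n+2) → Fin (n+2)), True := fun _ _ _ => trivial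
  have hevaldet : ∀ (t : ℝ) {k : ℕ} (f g : Fin k → Fin (n+2)),
      Polynomial.eval t (Mt.submatrix f g).det = ((M + t • 1).submatrix f g).det := by
    intro t k f g
    rw [← Polynomial.coe_evalRingHom, RingHom.map_det]
    congr 1
    ext i j
    simp [← hmap t, Matrix.map_apply]
  have hF0 : F = 0 := by
    apply Polynomial.eq_zero_of_infinite_isRoot
    apply Set.Infinite.mono (s := {t : ℝ | ¬ Polynomial.IsRoot Mt.det t})
    · intro t ht
      have hd : ((M + t • 1).submatrix (id : Fin (n+2) → Fin (n+2)) id).det ≠ 0 := by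
        rw [← hevaldet t id id]; exact ht
      rw [Matrix.submatrix_id_id] at hd
      have := dj_nonsing (M + t • 1) hd
      simp only [Set.mem_setOf_eq, Polynomial.IsRoot, hF]
      have h1 := hevaldet t (Fin.castAdd 2) (Fin.castAdd 2)
      have h2 := hevaldet t Fin.castSucc Fin.castSucc
      have h3 := hevaldet t (Fin.succAbove ⟨n, by omega⟩) (Fin.succAbove ⟨n, by omega⟩)
      have h4 := hevaldet t Fin.castSucc (Fin.succAbove ⟨n, by omega⟩)
      have h5 := hevaldet t (Fin.succAbove ⟨n, by omega⟩) Fin.castSucc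
      have h6 := hevaldet t id id
      simp only [Matrix.submatrix_id_id] at h6
      simp [h1, h2, h3, h4, h5, h6, this]
    · have : {t : ℝ | Polynomial.IsRoot Mt.det t}.Finite := Polynomial.finite_setOf_isRoot hdetMt
      exact this.infinite_compl
  have := congrArg (Polynomial.eval 0) hF0
  have h1 := hevaldet 0 (Fin.castAdd 2) (Fin.castAdd 2)
  have h2 := hevaldet 0 Fin.castSucc Fin.castSucc
  have h3 := hevaldet 0 (Fin.succAbove ⟨n, by omega⟩) (Fin.succAbove ⟨n, by omega⟩)
  have h4 := hevaldet 0 Fin.castSucc (Fin.succAbove ⟨n, by omega⟩)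
  have h5 := hevaldet 0 (Fin.succAbove ⟨n, by omega⟩) Fin.castSucc
  have h6 := hevaldet 0 id id
  simp only [Matrix.submatrix_id_id, zero_smul, add_zero] at h1 h2 h3 h4 h5 h6
  simp only [hF, Polynomial.eval_sub, Polynomial.eval_mul, Polynomial.eval_zero,
    h1, h2, h3, h4, h5, h6] at this
  linarith [this]


private lemma subext {m : ℕ} (A : Matrix (Fin m) (Fin m) ℝ) {l : ℕ}
    (f g f' g' : Fin l → Fin m) (hf : ∀ i, (f i : ℕ) = (f' i : ℕ))
    (hg : ∀ i, (g i : ℕ) = (g' i : ℕ)) :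
    A.submatrix f g = A.submatrix f' g' := by
  ext i k
  simp only [Matrix.submatrix_apply]
  congr 1
  · exact Fin.ext (hf i)
  · exact Fin.ext (hg k)

private lemma prod_step (f : ℕ → ℝ) (n : ℕ) (hn : 1 ≤ n) :
    ∏ k ∈ Finset.Icc 1 n, f k ^ (2 ^ (n - k)) =
    (∏ k ∈ Finset.Icc 1 (n - 1), f k ^ (2 ^ (n - 1 - k))) ^ 2 * f n := by
  obtain ⟨n', rfl⟩ : ∃ n', n = n' + 1 := ⟨n - 1, by omega⟩
  rw [Finset.prod_Icc_succ_top (by omega)]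
  simp only [Nat.add_sub_cancel, Nat.sub_self, pow_zero, pow_one]
  congr 1
  rw [← Finset.prod_pow]
  apply Finset.prod_congr rfl
  intro k hk
  rw [← pow_mul]
  congr 1
  have hk' : k ≤ n' := by
    have := (Finset.mem_Icc.mp hk).2; omega
  rw [show n' + 1 - k = (n' - k) + 1 by omega, pow_succ]



/-- `leadingMinor A k` is the `k`-th leading principal minor of `A` (the determinant of
the top-left `k × k` submatrix), with junk value `0` when `k > m`. -/
noncomputable def leadingMinor {m : ℕ} (A : Matrix (Fin m) (Fin m) ℝ) (k : ℕ) : ℝ :=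
  if h : k ≤ m then (A.submatrix (Fin.castLE h) (Fin.castLE h)).det else 0

/-- For an `m × m` real symmetric matrix `A`, the recursively defined
quantity `K_m^m` satisfies `K_m^m = det[m] · ∏_{k=1}^{m-2} (det[k])^{2^{m-k-2}}` when
`m > 2`, and `K_2^2 = det[2]` when `m = 2`.  Here `K j l` denotes the paper's `K_j^l`
(the recursion applied to the leading `j × j` submatrix of `A`) and `H j l` the
paper's `H_j^l`; matrix entries are `0`-based, so the paper's `a_{ℓκ}` is
`A ⟨ℓ-1,_⟩ ⟨κ-1,_⟩`. -/
theorem stmt10 (m : ℕ) (hm : 2 ≤ m)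
    (A : Matrix (Fin m) (Fin m) ℝ) (hsymm : A.IsSymm)
    (K H : ℕ → ℕ → ℝ)
    (hK2 : ∀ j, 2 ≤ j → ∀ hj : j ≤ m,
      K j 2 = A ⟨0, by omega⟩ ⟨0, by omega⟩ * A ⟨j - 1, by omega⟩ ⟨j - 1, by omega⟩ -
        (A ⟨0, by omega⟩ ⟨j - 1, by omega⟩) ^ 2)
    (hH2 : ∀ j, 2 ≤ j → ∀ hj : j ≤ m,
      H j 2 = A ⟨0, by omega⟩ ⟨0, by omega⟩ * A ⟨1, by omega⟩ ⟨j - 1, by omega⟩ -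
        A ⟨0, by omega⟩ ⟨1, by omega⟩ * A ⟨0, by omega⟩ ⟨j - 1, by omega⟩)
    (hKrec : ∀ j l, 3 ≤ l → l ≤ j → j ≤ m →
      K j l = K (l - 1) (l - 1) * K j (l - 1) - (H j (l - 1)) ^ 2)
    (hHrec : ∀ j l, ∀ _h3 : 3 ≤ l, ∀ _hjl : l ≤ j - 1, ∀ hj : j ≤ m,
      H j l = (A.submatrix
          (fun i : Fin l => (⟨(i : ℕ), by have := i.isLt; omega⟩ : Fin m))
          (fun i : Fin l => if (i : ℕ) < l - 1 then
              (⟨(i : ℕ), by have := i.isLt; omega⟩ : Fin m)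
            else (⟨j - 1, by omega⟩ : Fin m))).det *
        ∏ k ∈ Finset.Icc 1 (l - 2), (leadingMinor A k) ^ (2 ^ (l - k - 2))) :
    (2 < m →
      K m m = leadingMinor A m * ∏ k ∈ Finset.Icc 1 (m - 2),
        (leadingMinor A k) ^ (2 ^ (m - k - 2))) ∧
    (m = 2 → K 2 2 = leadingMinor A 2) := by

  have key : ∀ l, ∀ _hl2 : 2 ≤ l, ∀ j, ∀ _hlj : l ≤ j, ∀ hj : j ≤ m,
      K j l = (A.submatrix
          (fun i : Fin l => if (i : ℕ) < l - 1 then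
              (⟨(i : ℕ), by have := i.isLt; omega⟩ : Fin m)
            else (⟨j - 1, by omega⟩ : Fin m))
          (fun i : Fin l => if (i : ℕ) < l - 1 then
              (⟨(i : ℕ), by have := i.isLt; omega⟩ : Fin m)
            else (⟨j - 1, by omega⟩ : Fin m))).det *
        ∏ k ∈ Finset.Icc 1 (l - 2), (leadingMinor A k) ^ (2 ^ (l - k - 2)) := by
    intro l hl
    induction l, hl using Nat.le_induction with
    | base =>
      intro j hlj hjm
      rw [hK2 j hlj hjm, Matrix.det_fin_two]
      simp only [Matrix.submatrix_apply]
      norm_num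
      rw [hsymm.apply ⟨0, by omega⟩ ⟨j - 1, by omega⟩]
      ring
    | succ l hl IH =>
      intro j hlj hjm
      obtain ⟨n, rfl⟩ : ∃ n, l = n + 1 := ⟨l - 1, by omega⟩
      have hn : 1 ≤ n := by omega
      have hjm' : j - 1 < m := by omega
      have hnm : n ≤ m := by omega
      have hn1m : n + 1 ≤ m := by omega
      set r : Fin (n + 2) → Fin m := fun i =>
        if (i : ℕ) < n + 1 then ⟨(i : ℕ), by have := i.isLt; omega⟩
        else ⟨j - 1, by omega⟩ with hr
      set rl : Fin (n + 1) → Fin m := fun i =>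
        if (i : ℕ) < n then ⟨(i : ℕ), by have := i.isLt; omega⟩
        else ⟨j - 1, by omega⟩ with hrl
      set il : Fin (n + 1) → Fin m := fun i => ⟨(i : ℕ), by have := i.isLt; omega⟩ with hil
      have hrval : ∀ i : Fin (n + 2), (r i : ℕ) = if (i : ℕ) < n + 1 then (i : ℕ) else j - 1 := by
        intro i; simp only [hr]; split_ifs <;> rfl
      have hrlval : ∀ i : Fin (n + 1), (rl i : ℕ) = if (i : ℕ) < n then (i : ℕ) else j - 1 := by
        intro i; simp only [hrl]; split_ifs <;> rfl
      have hilval : ∀ i : Fin (n + 1), (il i : ℕ) = (i : ℕ) := by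
        intro i; simp only [hil]
      have hsa : ∀ i : Fin (n + 1),
          (((⟨n, by omega⟩ : Fin (n + 2)).succAbove i : Fin (n + 2)) : ℕ) =
            if (i : ℕ) < n then (i : ℕ) else (i : ℕ) + 1 := by
        intro i
        by_cases hi : (i : ℕ) < n
        · rw [Fin.succAbove_of_castSucc_lt _ _ (by simp [Fin.lt_def, hi])]
          simp [hi]
        · rw [Fin.succAbove_of_le_castSucc _ _ (by simp [Fin.le_def]; omega)]
          simp [hi, Fin.val_succ]
      -- the four submatrices of A.submatrix r r
      have h1 : (A.submatrix r r).submatrix Fin.castSucc Fin.castSucc = A.submatrix il il := by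
        rw [Matrix.submatrix_submatrix]
        refine subext A _ _ _ _ (fun i => ?_) (fun i => ?_) <;>
          · simp only [Function.comp_apply, hrval, hilval, Fin.coe_castSucc]
            have := i.isLt; split_ifs <;> omega
      have h2 : (A.submatrix r r).submatrix
          ((⟨n, by omega⟩ : Fin (n + 2)).succAbove) ((⟨n, by omega⟩ : Fin (n + 2)).succAbove) =
          A.submatrix rl rl := by
        rw [Matrix.submatrix_submatrix]
        refine subext A _ _ _ _ (fun i => ?_) (fun i => ?_) <;>
          · simp only [Function.comp_apply, hrval, hrlval, hsa]
            have := i.isLt; split_ifs <;> omega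
      have h3 : (A.submatrix r r).submatrix Fin.castSucc
          ((⟨n, by omega⟩ : Fin (n + 2)).succAbove) = A.submatrix il rl := by
        rw [Matrix.submatrix_submatrix]
        refine subext A _ _ _ _ (fun i => ?_) (fun i => ?_)
        · simp only [Function.comp_apply, hrval, hilval, Fin.coe_castSucc]
          have := i.isLt; split_ifs <;> omega
        · simp only [Function.comp_apply, hrval, hrlval, hsa]
          have := i.isLt; split_ifs <;> omega
      have h4 : (A.submatrix r r).submatrix
          ((⟨n, by omega⟩ : Fin (n + 2)).succAbove) Fin.castSucc = A.submatrix rl il := by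
        rw [Matrix.submatrix_submatrix]
        refine subext A _ _ _ _ (fun i => ?_) (fun i => ?_)
        · simp only [Function.comp_apply, hrval, hrlval, hsa]
          have := i.isLt; split_ifs <;> omega
        · simp only [Function.comp_apply, hrval, hilval, Fin.coe_castSucc]
          have := i.isLt; split_ifs <;> omega
      have h5 : (A.submatrix r r).submatrix (Fin.castAdd 2) (Fin.castAdd 2) =
          A.submatrix (Fin.castLE hnm) (Fin.castLE hnm) := by
        rw [Matrix.submatrix_submatrix]
        refine subext A _ _ _ _ (fun i => ?_) (fun i => ?_) <;>
          · simp only [Function.comp_apply, hrval, Fin.coe_castAdd, Fin.coe_castLE]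
            have := i.isLt; split_ifs <;> omega
      have hdj := dj (A.submatrix r r)
      rw [h1, h2, h3, h4, h5] at hdj
      have hLMn : (A.submatrix (Fin.castLE hnm) (Fin.castLE hnm)).det = leadingMinor A n := by
        rw [leadingMinor, dif_pos hnm]
      have hLMn1 : (A.submatrix il il).det = leadingMinor A (n + 1) := by
        rw [leadingMinor, dif_pos hn1m]
        apply congrArg Matrix.det
        refine subext A _ _ _ _ (fun i => ?_) (fun i => ?_) <;> simp [hilval]
      rw [hLMn, hLMn1] at hdj
      have hsymdet : (A.submatrix rl il).det = (A.submatrix il rl).det := by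
        rw [← Matrix.det_transpose (A.submatrix il rl)]
        apply congrArg Matrix.det
        ext i k
        simp only [Matrix.transpose_apply, Matrix.submatrix_apply]
        exact (hsymm.apply _ _).symm
      rw [hsymdet] at hdj
      -- hdj : (A.submatrix r r).det * leadingMinor A n
      --     = leadingMinor A (n+1) * (A.submatrix rl rl).det - (A.submatrix il rl).det ^ 2-ish
      set Pl : ℝ := ∏ k ∈ Finset.Icc 1 (n + 1 - 2), (leadingMinor A k) ^ (2 ^ (n + 1 - k - 2))
        with hPl
      have hKl : K (n + 1) (n + 1) = leadingMinor A (n + 1) * Pl := by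
        rw [IH (n + 1) le_rfl hn1m]
        congr 1
        rw [← hLMn1]
        apply congrArg Matrix.det
        refine subext A _ _ _ _ (fun i => ?_) (fun i => ?_) <;>
          · simp only [hilval, apply_ite (Fin.val (n := m))]
            have := i.isLt; split_ifs <;> omega
      have hKjl : K j (n + 1) = (A.submatrix rl rl).det * Pl := by
        rw [IH j (by omega) hjm]
        congr 1
      have hH : H j (n + 1) = (A.submatrix il rl).det * Pl := by
        rcases Nat.lt_or_ge n 2 with h2' | h2'
        · have hn1 : n = 1 := by omega
          subst hn1
          rw [hH2 j (by omega) hjm, Matrix.det_fin_two]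
          simp only [Matrix.submatrix_apply]
          have e0 : il 0 = ⟨0, by omega⟩ := Fin.ext (by simp [hilval])
          have e1 : il 1 = ⟨1, by omega⟩ := Fin.ext (by simp [hilval])
          have f0 : rl 0 = ⟨0, by omega⟩ := Fin.ext (by simp [hrlval])
          have f1 : rl 1 = ⟨j - 1, by omega⟩ := Fin.ext (by simp [hrlval])
          rw [e0, e1, f0, f1, hPl]
          norm_num
          rw [hsymm.apply ⟨0, by omega⟩ ⟨1, by omega⟩]
          ring
        · rw [hHrec j (n + 1) (by omega) (by omega) hjm]
          congr 1
      have hrec := hKrec j (n + 1 + 1) (by omega) (by omega) hjm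
      simp only [Nat.add_sub_cancel] at hrec
      rw [hrec, hKl, hKjl, hH]
      have hGr : (A.submatrix
          (fun i : Fin (n + 1 + 1) => if (i : ℕ) < n + 1 + 1 - 1 then
              (⟨(i : ℕ), by have := i.isLt; omega⟩ : Fin m)
            else (⟨j - 1, by omega⟩ : Fin m))
          (fun i : Fin (n + 1 + 1) => if (i : ℕ) < n + 1 + 1 - 1 then
              (⟨(i : ℕ), by have := i.isLt; omega⟩ : Fin m)
            else (⟨j - 1, by omega⟩ : Fin m))) = A.submatrix r r := by
        refine subext A _ _ _ _ (fun i => ?_) (fun i => ?_) <;>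
          · simp only [hrval, apply_ite (Fin.val (n := m))]
            have := i.isLt; split_ifs <;> omega
      rw [hGr]
      have hPstep : (∏ k ∈ Finset.Icc 1 (n + 1 + 1 - 2),
          (leadingMinor A k) ^ (2 ^ (n + 1 + 1 - k - 2))) = Pl ^ 2 * leadingMinor A n := by
        have eb : n + 1 + 1 - 2 = n := by omega
        rw [eb]
        have : (∏ k ∈ Finset.Icc 1 n, (leadingMinor A k) ^ (2 ^ (n + 1 + 1 - k - 2))) =
            ∏ k ∈ Finset.Icc 1 n, (leadingMinor A k) ^ (2 ^ (n - k)) := by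
          refine Finset.prod_congr rfl (fun k hk => ?_)
          have hk2 := (Finset.mem_Icc.mp hk).2
          rw [show n + 1 + 1 - k - 2 = n - k by omega]
        rw [this, prod_step _ n hn, hPl]
        have eb2 : n + 1 - 2 = n - 1 := by omega
        rw [eb2]
        congr 2
        refine Finset.prod_congr rfl (fun k hk => ?_)
        have hk2 := (Finset.mem_Icc.mp hk).2
        rw [show n + 1 - k - 2 = n - 1 - k by omega]
      rw [hPstep]
      linear_combination (-(Pl ^ 2)) * hdj
  constructor
  · intro _
    rw [key m hm m le_rfl le_rfl]
    congr 1
    rw [leadingMinor, dif_pos (le_refl m)]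
    apply congrArg Matrix.det
    refine subext A _ _ _ _ (fun i => ?_) (fun i => ?_) <;>
      · simp only [Fin.coe_castLE, apply_ite (Fin.val (n := m))]
        have := i.isLt; split_ifs <;> omega
  · intro h2
    subst h2
    rw [key 2 le_rfl 2 le_rfl le_rfl]
    have : Finset.Icc 1 (2 - 2) = ∅ := by decide
    rw [this]
    simp only [Finset.prod_empty, mul_one]
    rw [leadingMinor, dif_pos (le_refl 2)]
    apply congrArg Matrix.det
    refine subext A _ _ _ _ (fun i => ?_) (fun i => ?_) <;>
      · simp only [Fin.coe_castLE, apply_ite (Fin.val (n := 2))]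
        have := i.isLt; split_ifs <;> omega
end

section
/- The second leading principal minor of A satisfies det[2] = a_{11}a_{22} − (a_{12})² = λ_1 λ_2 · θ_1^{2(p_1+1)²} · (∏_{k=2}^{m−1} θ_k^{2(p_k+2)²}) · (θ_1² − A_{12}²), where A_{12} = (λ_1 + λ_2)/(2√(λ_1 λ_2)). In particular det[2] > 0 if and only if θ_1² > A_{12}². -/
open Real Matrix Finset

lemma stmt12_alg (l0 l1 Ta Tb Tc T2 PP : ℝ) (h0 : l0 ≠ 0) (h1 : l1 ≠ 0)
    (hab : Ta * Tb = Tc ^ 2 * T2) :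
    l0 * (Ta * PP) * (l1 * (Tb * PP)) - ((l0 + l1) / 2 * (Tc * PP)) ^ 2
      = l0 * l1 * Tc ^ 2 * PP ^ 2 * (T2 - (l0 + l1) ^ 2 / (4 * (l0 * l1))) := by
  field_simp
  linear_combination (16 * l0 * l1 * PP ^ 2) * hab

/-- The second leading principal minor of `A` satisfies
`det[2] = a₁₁a₂₂ − a₁₂² = λ₁λ₂ · θ₁^{2(p₁+1)²} · ∏_{k=2}^{m-1} θ_k^{2(p_k+2)²} · (θ₁² − A₁₂²)`
with `A₁₂ = (λ₁+λ₂)/(2√(λ₁λ₂))`; in particular `det[2] > 0 ↔ θ₁² > A₁₂²`.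
Indices are `0`-based (the paper's `λ_ℓ` is `lam ⟨ℓ-1,_⟩`, `θ_k` is `θ ⟨k-1,_⟩`,
`p_k` is `p ⟨k-1,_⟩`, `a_{ℓκ}` is `A ⟨ℓ-1,_⟩ ⟨κ-1,_⟩`). -/
theorem stmt12 (m : ℕ) (hm : 2 ≤ m)
    (lam : Fin m → ℝ) (hlam : ∀ ℓ, 0 < lam ℓ)
    (θ : Fin (m - 1) → ℝ) (hθ : ∀ k, 0 < θ k)
    (p : Fin (m - 1) → ℕ)
    (A : Matrix (Fin m) (Fin m) ℝ)
    (hA : ∀ ℓ κ : Fin m, A ℓ κ =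
      ((lam ℓ + lam κ) / 2) *
        ∏ k : Fin (m - 1),
          θ k ^ (if (k : ℕ) < min (ℓ : ℕ) (κ : ℕ) then (p k) ^ 2
            else if (k : ℕ) < max (ℓ : ℕ) (κ : ℕ) then (p k + 1) ^ 2
            else (p k + 2) ^ 2)) :
    leadingMinor A 2 =
        A ⟨0, by omega⟩ ⟨0, by omega⟩ * A ⟨1, by omega⟩ ⟨1, by omega⟩ -
          (A ⟨0, by omega⟩ ⟨1, by omega⟩) ^ 2 ∧
    leadingMinor A 2 =
        lam ⟨0, by omega⟩ * lam ⟨1, by omega⟩ *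
          θ ⟨0, by omega⟩ ^ (2 * (p ⟨0, by omega⟩ + 1) ^ 2) *
          (∏ k ∈ Finset.univ.filter (fun k : Fin (m - 1) => 1 ≤ (k : ℕ)),
            θ k ^ (2 * (p k + 2) ^ 2)) *
          (θ ⟨0, by omega⟩ ^ 2 -
            ((lam ⟨0, by omega⟩ + lam ⟨1, by omega⟩) /
              (2 * Real.sqrt (lam ⟨0, by omega⟩ * lam ⟨1, by omega⟩))) ^ 2) ∧
    (0 < leadingMinor A 2 ↔
      ((lam ⟨0, by omega⟩ + lam ⟨1, by omega⟩) /
        (2 * Real.sqrt (lam ⟨0, by omega⟩ * lam ⟨1, by omega⟩))) ^ 2 <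
        θ ⟨0, by omega⟩ ^ 2) := by

  have hm1 : 1 ≤ m - 1 := by omega
  set i0 : Fin m := ⟨0, by omega⟩ with hi0
  set i1 : Fin m := ⟨1, by omega⟩ with hi1
  set k0 : Fin (m - 1) := ⟨0, by omega⟩ with hk0
  have v0 : (i0 : ℕ) = 0 := rfl
  have v1 : (i1 : ℕ) = 1 := rfl
  have vk0 : (k0 : ℕ) = 0 := rfl
  set P : ℝ := ∏ k ∈ Finset.univ.filter (fun k : Fin (m - 1) => 1 ≤ (k : ℕ)),
      θ k ^ ((p k + 2) ^ 2) with hP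
  have hPpos : 0 < P := Finset.prod_pos (fun k _ => pow_pos (hθ k) _)
  have hfilt : (Finset.univ.filter (fun k : Fin (m - 1) => ¬ 1 ≤ (k : ℕ))) = {k0} := by
    ext k
    simp only [Finset.mem_filter, Finset.mem_univ, true_and, Finset.mem_singleton,
      Fin.ext_iff, hk0]
    omega
  have split : ∀ e : Fin (m - 1) → ℕ, (∀ k : Fin (m - 1), 1 ≤ (k : ℕ) → e k = (p k + 2) ^ 2) →
      ∏ k : Fin (m - 1), θ k ^ e k = θ k0 ^ e k0 * P := by
    intro e he
    rw [← Finset.prod_filter_mul_prod_filter_not Finset.univ (fun k : Fin (m - 1) => 1 ≤ (k : ℕ)),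
      hfilt, Finset.prod_singleton, mul_comm, hP]
    congr 1
    exact Finset.prod_congr rfl (fun k hk => by
      rw [he k (Finset.mem_filter.mp hk).2])
  -- entries
  have ha00 : A i0 i0 = lam i0 * (θ k0 ^ ((p k0 + 2) ^ 2) * P) := by
    rw [hA i0 i0]
    have h1 : ∏ k : Fin (m - 1),
        θ k ^ (if (k : ℕ) < min (i0 : ℕ) (i0 : ℕ) then (p k) ^ 2
          else if (k : ℕ) < max (i0 : ℕ) (i0 : ℕ) then (p k + 1) ^ 2
          else (p k + 2) ^ 2) = θ k0 ^ ((p k0 + 2) ^ 2) * P := by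
      rw [Finset.prod_congr rfl (fun k _ => by
        rw [show (if (k : ℕ) < min (i0 : ℕ) (i0 : ℕ) then (p k) ^ 2
          else if (k : ℕ) < max (i0 : ℕ) (i0 : ℕ) then (p k + 1) ^ 2
          else (p k + 2) ^ 2) = (p k + 2) ^ 2 by
            simp only [v0]; split_ifs <;> omega])]
      exact split _ (fun k _ => rfl)
    rw [h1]; ring
  have ha11 : A i1 i1 = lam i1 * (θ k0 ^ ((p k0) ^ 2) * P) := by
    rw [hA i1 i1]
    have h1 : ∏ k : Fin (m - 1),
        θ k ^ (if (k : ℕ) < min (i1 : ℕ) (i1 : ℕ) then (p k) ^ 2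
          else if (k : ℕ) < max (i1 : ℕ) (i1 : ℕ) then (p k + 1) ^ 2
          else (p k + 2) ^ 2)
        = θ k0 ^ ((fun k : Fin (m - 1) =>
            if (k : ℕ) < 1 then (p k) ^ 2 else (p k + 2) ^ 2) k0) * P := by
      rw [Finset.prod_congr rfl (fun k _ => by
        rw [show (if (k : ℕ) < min (i1 : ℕ) (i1 : ℕ) then (p k) ^ 2
          else if (k : ℕ) < max (i1 : ℕ) (i1 : ℕ) then (p k + 1) ^ 2
          else (p k + 2) ^ 2)
          = (if (k : ℕ) < 1 then (p k) ^ 2 else (p k + 2) ^ 2) by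
            simp only [v1]; split_ifs <;> omega])]
      exact split _ (fun k hk => by rw [if_neg (Nat.not_lt.mpr hk)])
    rw [h1]
    simp only []
    rw [if_pos (show (k0 : ℕ) < 1 by omega)]
    ring
  have ha01 : A i0 i1 = (lam i0 + lam i1) / 2 * (θ k0 ^ ((p k0 + 1) ^ 2) * P) := by
    rw [hA i0 i1]
    have h1 : ∏ k : Fin (m - 1),
        θ k ^ (if (k : ℕ) < min (i0 : ℕ) (i1 : ℕ) then (p k) ^ 2
          else if (k : ℕ) < max (i0 : ℕ) (i1 : ℕ) then (p k + 1) ^ 2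
          else (p k + 2) ^ 2)
        = θ k0 ^ ((fun k : Fin (m - 1) =>
            if (k : ℕ) < 1 then (p k + 1) ^ 2 else (p k + 2) ^ 2) k0) * P := by
      rw [Finset.prod_congr rfl (fun k _ => by
        rw [show (if (k : ℕ) < min (i0 : ℕ) (i1 : ℕ) then (p k) ^ 2
          else if (k : ℕ) < max (i0 : ℕ) (i1 : ℕ) then (p k + 1) ^ 2
          else (p k + 2) ^ 2)
          = (if (k : ℕ) < 1 then (p k + 1) ^ 2 else (p k + 2) ^ 2) by
            simp only [v0, v1]; split_ifs <;> omega])]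
      exact split _ (fun k hk => by rw [if_neg (Nat.not_lt.mpr hk)])
    rw [h1]
    simp only []
    rw [if_pos (show (k0 : ℕ) < 1 by omega)]
  have ha10 : A i1 i0 = A i0 i1 := by
    rw [hA i1 i0, hA i0 i1, Nat.min_comm, Nat.max_comm, add_comm (lam i1)]
  have hdet : leadingMinor A 2 = A i0 i0 * A i1 i1 - A i0 i1 ^ 2 := by
    rw [leadingMinor, dif_pos hm, Matrix.det_fin_two]
    have e0 : Fin.castLE hm (0 : Fin 2) = i0 := rfl
    have e1 : Fin.castLE hm (1 : Fin 2) = i1 := rfl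
    simp only [Matrix.submatrix_apply, e0, e1, ha10]
    ring
  have hl0 := hlam i0
  have hl1 := hlam i1
  have hP2 : (∏ k ∈ Finset.univ.filter (fun k : Fin (m - 1) => 1 ≤ (k : ℕ)),
      θ k ^ (2 * (p k + 2) ^ 2)) = P ^ 2 := by
    rw [hP, ← Finset.prod_pow]
    exact Finset.prod_congr rfl (fun k _ => by rw [← pow_mul, mul_comm])
  have hS : ((lam i0 + lam i1) / (2 * Real.sqrt (lam i0 * lam i1))) ^ 2
      = (lam i0 + lam i1) ^ 2 / (4 * (lam i0 * lam i1)) := by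
    rw [div_pow, mul_pow, Real.sq_sqrt (by positivity)]
    norm_num
  have hpow : θ k0 ^ ((p k0 + 2) ^ 2) * θ k0 ^ ((p k0) ^ 2)
      = (θ k0 ^ ((p k0 + 1) ^ 2)) ^ 2 * θ k0 ^ 2 := by
    rw [← pow_mul, ← pow_add, ← pow_add]
    congr 1
    ring
  have h2c : (θ k0 ^ ((p k0 + 1) ^ 2)) ^ 2 = θ k0 ^ (2 * (p k0 + 1) ^ 2) := by
    rw [← pow_mul, mul_comm]
  have halg := stmt12_alg (lam i0) (lam i1) (θ k0 ^ ((p k0 + 2) ^ 2)) (θ k0 ^ ((p k0) ^ 2))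
    (θ k0 ^ ((p k0 + 1) ^ 2)) (θ k0 ^ 2) P (ne_of_gt hl0) (ne_of_gt hl1) hpow
  refine ⟨hdet, ?_, ?_⟩
  · rw [hdet, ha00, ha11, ha01, hP2, hS, ← h2c, halg]
  · rw [hdet, ha00, ha11, ha01, hS, halg]
    have hC : 0 < lam i0 * lam i1 * (θ k0 ^ ((p k0 + 1) ^ 2)) ^ 2 * P ^ 2 :=
      mul_pos (mul_pos (mul_pos hl0 hl1) (pow_pos (pow_pos (hθ k0) _) _)) (pow_pos hPpos 2)
    rw [mul_pos_iff_of_pos_left hC, sub_pos]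
end
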